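/- arXiv:0908.2833 — 5 statements merged into one kernel-verified Lean document; each statement's English description precedes it below -/
import Mathlib

section
/- Let g : ℝ → L(F) be the fundamental solution associated to the continuous curve X : ℝ → L(F). For fixed s ∈ ℝ, let h : ℝ → L(F) be the fundamental solution associated to t ↦ X(t+s). Then g(s) is invertible with inverse h(-s). -/
/-!
Both `t ↦ g (t + s) ∘L h (-s)` and `h` solve the linear equation `y' = X (t + s) ∘L y` and agree
at `t = -s`; likewise `t ↦ h (t - s) ∘L g s` and `g` solve `y' = X t ∘L y` and agree at `t = s`.
Since `y ↦ X t ∘L y` is Lipschitz uniformly in `t`, solutions of these equations are determined by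
their value at one time, and evaluating both identities at `t = 0` gives the two inverse relations.
-/

open Set ContinuousLinearMap
open scoped NNReal

section

variable {D E F G : Type*} [NormedAddCommGroup D] [NormedSpace ℝ D] [NormedAddCommGroup E]
  [NormedSpace ℝ E] [NormedAddCommGroup F] [NormedSpace ℝ F] [NormedAddCommGroup G]
  [NormedSpace ℝ G]

theorem ContinuousLinearMap.lipschitzWith_comp_left (A : F →L[ℝ] G) :
    LipschitzWith ‖A‖₊ fun y : E →L[ℝ] F => A ∘L y :=
  LipschitzWith.of_dist_le_mul fun a b => by
    simpa only [dist_eq_norm, coe_nnnorm, ← comp_sub] using opNorm_comp_le A (a - b)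

theorem linear_ODE_solution_unique {X : ℝ → F →L[ℝ] F} {K : ℝ≥0} (hX : ∀ t, ‖X t‖₊ ≤ K)
    {f g : ℝ → E →L[ℝ] F} (hf : ∀ t, HasDerivAt f (X t ∘L f t) t)
    (hg : ∀ t, HasDerivAt g (X t ∘L g t) t) {t₀ : ℝ} (heq : f t₀ = g t₀) : f = g :=
  ODE_solution_unique_univ (s := fun _ => univ)
    (fun t => ((lipschitzWith_comp_left (X t)).weaken (hX t)).lipschitzOnWith)
    (fun t => ⟨hf t, trivial⟩) (fun t => ⟨hg t, trivial⟩) heq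

theorem HasDerivAt.comp_add_const_comp_right {Y : ℝ → F →L[ℝ] F} {f : ℝ → E →L[ℝ] F}
    {t a : ℝ} (hf : HasDerivAt f (Y (t + a) ∘L f (t + a)) (t + a)) (C : D →L[ℝ] E) :
    HasDerivAt (fun u => f (u + a) ∘L C) (Y (t + a) ∘L (f (t + a) ∘L C)) t := by
  simpa only [comp_zero, add_zero, comp_assoc] using
    (hf.comp_add_const t a).clm_comp (hasDerivAt_const t C)

end

theorem fundamental_solution_inverse_general
    {F : Type*} [NormedAddCommGroup F] [NormedSpace ℝ F]
    (X g h : ℝ → F →L[ℝ] F) (s : ℝ)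
    (hXbdd : ∃ M : ℝ, ∀ t, ‖X t‖ ≤ M)
    (hg0 : g 0 = 1) (hg : ∀ t, HasDerivAt g (X t ∘L g t) t)
    (hh0 : h 0 = 1) (hh : ∀ t, HasDerivAt h (X (t + s) ∘L h t) t) :
    g s ∘L h (-s) = 1 ∧ h (-s) ∘L g s = 1 := by
  obtain ⟨M, hM⟩ := hXbdd
  have hK : ∀ t, ‖X t‖₊ ≤ M.toNNReal := fun t => by
    simpa only [← NNReal.coe_le_coe, coe_nnnorm] using (hM t).trans M.le_coe_toNNReal
  have hg_shift : (fun t => g (t + s) ∘L h (-s)) = h :=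
    linear_ODE_solution_unique (t₀ := -s) (fun t => hK (t + s))
      (fun t => (hg (t + s)).comp_add_const_comp_right (h (-s))) hh (by simp [hg0, one_def])
  have hh_shift : (fun t => h (t + -s) ∘L g s) = g :=
    linear_ODE_solution_unique (t₀ := s) hK
      (fun t => by
        simpa using (hh (t + -s)).comp_add_const_comp_right (Y := fun u => X (u + s)) (g s))
      hg (by simp [hh0, one_def])
  constructor
  · simpa [hh0] using congrFun hg_shift 0
  · simpa [hg0] using congrFun hh_shift 0

/-- If `g` is the fundamental solution associated to `X` and `h` is the fundamental
solution associated to `t ↦ X (t + s)`, then `g s` is invertible with inverse `h (-s)`. -/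
theorem fundamental_solution_inverse
    {F : Type*} [NormedAddCommGroup F] [NormedSpace ℝ F] [CompleteSpace F]
    (X g h : ℝ → F →L[ℝ] F) (s : ℝ)
    (hX : Continuous X) (hXbdd : ∃ M : ℝ, ∀ t, ‖X t‖ ≤ M)
    (hg0 : g 0 = 1) (hg : ∀ t, HasDerivAt g (X t ∘L g t) t)
    (hh0 : h 0 = 1) (hh : ∀ t, HasDerivAt h (X (t + s) ∘L h t) t) :
    g s ∘L h (-s) = 1 ∧ h (-s) ∘L g s = 1 :=
  fundamental_solution_inverse_general X g h s hXbdd hg0 hg hh0 hh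
end

section
/- There exists a continuous function c : F → ℝ with c(x) ≥ 1 for all x, such that for all r, s ∈ [−2,2] and all x, y ∈ F: ‖x − y‖ ≤ c(x)(|s − r| + ‖g(s)x − g(r)y‖). -/
/-- There is a continuous `c : F → ℝ` with `c x ≥ 1` such that
`‖x − y‖ ≤ c x (|s − r| + ‖g s x − g r y‖)` for all `r, s ∈ [−2,2]` and `x, y ∈ F`. -/
theorem fundamental_solution_reverse_estimate
    {F : Type*} [NormedAddCommGroup F] [NormedSpace ℝ F] [CompleteSpace F]
    (X g ginv : ℝ → F →L[ℝ] F)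
    (hX : Continuous X) (hXper : ∀ t, X (t + 1) = X t)
    (hg0 : g 0 = 1) (hg : ∀ t, HasDerivAt g (X t ∘L g t) t)
    (hinv : ∀ s, g s ∘L ginv s = 1 ∧ ginv s ∘L g s = 1) :
    ∃ c : F → ℝ, Continuous c ∧ (∀ x, 1 ≤ c x) ∧
      ∀ r ∈ Set.Icc (-2 : ℝ) 2, ∀ s ∈ Set.Icc (-2 : ℝ) 2, ∀ x y : F,
        ‖x - y‖ ≤ c x * (|s - r| + ‖g s x - g r y‖) := by
  classical
  set K : Set ℝ := Set.Icc (-2 : ℝ) 2 with hK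
  have hgc : Continuous g := by
    rw [continuous_iff_continuousAt]
    exact fun t => (hg t).continuousAt
  -- units
  let u : ℝ → (F →L[ℝ] F)ˣ := fun t =>
    ⟨g t, ginv t, (hinv t).1, (hinv t).2⟩
  have hginv_eq : ginv = fun t => Ring.inverse (g t) := by
    funext t
    exact (Ring.inverse_unit (u t)).symm
  have hginvc : Continuous ginv := by
    rw [hginv_eq, continuous_iff_continuousAt]
    intro t
    have h : ContinuousAt Ring.inverse (g t) := NormedRing.inverse_continuousAt (u t)
    exact h.comp hgc.continuousAt
  -- bounds on K
  obtain ⟨C1, hC1⟩ := isCompact_Icc.exists_bound_of_continuousOn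
    (f := g) hgc.continuousOn
  obtain ⟨C2, hC2⟩ := isCompact_Icc.exists_bound_of_continuousOn
    (f := ginv) hginvc.continuousOn
  obtain ⟨C3, hC3⟩ := isCompact_Icc.exists_bound_of_continuousOn
    (f := fun t => X t ∘L g t) (hX.clm_comp hgc).continuousOn
  set D : ℝ := max (max C1 C2) 1 with hD
  have hD1 : (1 : ℝ) ≤ D := le_max_right _ _
  have hD0 : (0 : ℝ) ≤ D := le_trans zero_le_one hD1
  set M : ℝ := max C3 0 with hM
  have hM0 : (0 : ℝ) ≤ M := le_max_right _ _
  have hgD : ∀ t ∈ K, ‖g t‖ ≤ D := fun t ht =>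
    (hC1 t ht).trans (le_trans (le_max_left _ _) (le_max_left _ _))
  have hiD : ∀ t ∈ K, ‖ginv t‖ ≤ D := fun t ht =>
    (hC2 t ht).trans (le_trans (le_max_right _ _) (le_max_left _ _))
  -- Lipschitz bound for g on K
  have hlip : ∀ r ∈ K, ∀ s ∈ K, ‖g s - g r‖ ≤ M * |s - r| := by
    intro r hr s hs
    have := Convex.norm_image_sub_le_of_norm_hasDerivWithin_le
      (f := g) (f' := fun t => X t ∘L g t) (C := M) (s := K)
      (fun t ht => (hg t).hasDerivWithinAt)
      (fun t ht => (hC3 t ht).trans (le_max_left _ _))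
      (convex_Icc _ _) hr hs
    simpa [Real.norm_eq_abs, abs_sub_comm] using this
  refine ⟨fun x => D + D ^ 3 * M * ‖x‖, ?_, ?_, ?_⟩
  · exact continuous_const.add (continuous_const.mul continuous_norm)
  · intro x
    have : 0 ≤ D ^ 3 * M * ‖x‖ := by positivity
    dsimp only
    linarith
  intro r hr s hs x y
  set E : F := g s x - g r y with hE
  -- resolvent identity
  have happ1 : ∀ t w, g t (ginv t w) = w := by
    intro t w
    have h := (hinv t).1
    calc g t (ginv t w) = (g t ∘L ginv t) w := rfl
      _ = w := by rw [h]; rfl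
  have happ2 : ∀ t w, ginv t (g t w) = w := by
    intro t w
    have h := (hinv t).2
    calc ginv t (g t w) = (ginv t ∘L g t) w := rfl
      _ = w := by rw [h]; rfl
  have hres : ginv s - ginv r = ginv s ∘L (g r - g s) ∘L ginv r := by
    ext v
    simp [ContinuousLinearMap.comp_apply, ContinuousLinearMap.sub_apply, map_sub,
      happ1, happ2]
  -- key decomposition
  have hkey : x - y = ginv r E + (ginv s - ginv r) (g s x) := by
    simp only [hE, map_sub, ContinuousLinearMap.sub_apply, happ2 r, happ2 s]
    abel
  have hEn : ‖ginv r E‖ ≤ D * ‖E‖ :=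
    le_trans ((ginv r).le_opNorm E) (by
      have := hiD r hr
      exact mul_le_mul_of_nonneg_right this (norm_nonneg _))
  have hdn : ‖ginv s - ginv r‖ ≤ D * (M * |s - r|) * D := by
    rw [hres]
    calc ‖ginv s ∘L (g r - g s) ∘L ginv r‖
        ≤ ‖ginv s‖ * ‖(g r - g s) ∘L ginv r‖ := ContinuousLinearMap.opNorm_comp_le _ _
      _ ≤ ‖ginv s‖ * (‖g r - g s‖ * ‖ginv r‖) := by
          exact mul_le_mul_of_nonneg_left (ContinuousLinearMap.opNorm_comp_le _ _)
            (norm_nonneg _)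
      _ ≤ D * (M * |s - r|) * D := by
          have h1 := hiD s hs
          have h2 := hiD r hr
          have h3 : ‖g r - g s‖ ≤ M * |s - r| := by
            have := hlip s hs r hr
            simpa [abs_sub_comm] using this
          have hMn : (0:ℝ) ≤ M * |s - r| := mul_nonneg hM0 (abs_nonneg _)
          calc ‖ginv s‖ * (‖g r - g s‖ * ‖ginv r‖)
              ≤ D * ((M * |s - r|) * D) := by
                apply mul_le_mul h1 _ (by positivity) hD0
                exact mul_le_mul h3 h2 (norm_nonneg _) hMn
            _ = D * (M * |s - r|) * D := by ring
  have hgsx : ‖(ginv s - ginv r) (g s x)‖ ≤ D * (M * |s - r|) * D * (D * ‖x‖) := by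
    calc ‖(ginv s - ginv r) (g s x)‖
        ≤ ‖ginv s - ginv r‖ * ‖g s x‖ := ContinuousLinearMap.le_opNorm _ _
      _ ≤ (D * (M * |s - r|) * D) * (D * ‖x‖) := by
          apply mul_le_mul hdn _ (norm_nonneg _) (by positivity)
          calc ‖g s x‖ ≤ ‖g s‖ * ‖x‖ := ContinuousLinearMap.le_opNorm _ _
            _ ≤ D * ‖x‖ := mul_le_mul_of_nonneg_right (hgD s hs) (norm_nonneg _)
  have htri : ‖x - y‖ ≤ ‖ginv r E‖ + ‖(ginv s - ginv r) (g s x)‖ := by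
    rw [hkey]; exact norm_add_le _ _
  have hxn : (0:ℝ) ≤ ‖x‖ := norm_nonneg _
  have hEn0 : (0:ℝ) ≤ ‖E‖ := norm_nonneg _
  have habs : (0:ℝ) ≤ |s - r| := abs_nonneg _
  have hgsx' : D * (M * |s - r|) * D * (D * ‖x‖) = D ^ 3 * M * ‖x‖ * |s - r| := by ring
  rw [hgsx'] at hgsx
  show ‖x - y‖ ≤ (D + D ^ 3 * M * ‖x‖) * (|s - r| + ‖E‖)
  have h1 : 0 ≤ D * |s - r| := mul_nonneg hD0 habs
  have h2 : 0 ≤ D ^ 3 * M * ‖x‖ * ‖E‖ := by positivity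
  nlinarith
end

section
/- The recurrent set of the skew-product flow φᵗ equals S¹ ×_g R(g), where R(g) is the recurrent set of the discrete-time flow generated by g. That is, (s̄, g(s)x) is recurrent for φᵗ if and only if x is recurrent for g. -/
/-!
The fundamental solution of a `1`-periodic linear equation satisfies the Floquet relation
`g (t + n) = g t * g 1 ^ n`, because `t ↦ g (t + 1)` solves the same equation as `g`, so
`(g t)⁻¹ * g (t + 1)` has zero derivative. The flow moves `(s̄, g s x)` to `(s + t, g (s + t) x)`;
at integer times this is `(s̄, g s (g 1 ^ n x))`, so recurrence of `x` under `g 1` gives recurrence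
of the flow. Conversely, return times `u_k` of the flow are close to integers `m_k`, and
`g 1 ^ m_k x = (g (s + ε_k))⁻¹ g (s + u_k) x` with `ε_k = u_k - m_k → 0`, which tends to `x` by
continuity of the inverse.
-/

open Filter Topology

section Floquet

variable {R : Type*} [NormedRing R] [NormedAlgebra ℝ R] [HasSummableGeomSeries R]

theorem HasDerivAt.inverse {a : ℝ → R} {a' : R} {t : ℝ} (ha : HasDerivAt a a' t)
    (hu : IsUnit (a t)) :
    HasDerivAt (fun s => Ring.inverse (a s))
      (-(Ring.inverse (a t) * a' * Ring.inverse (a t))) t := by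
  obtain ⟨u, hu⟩ := hu
  have := (hu ▸ hasFDerivAt_ringInverse (𝕜 := ℝ) u).comp_hasDerivAt t ha
  simpa [← hu, Function.comp_def] using this

theorem eq_mul_inverse_mul_of_hasDerivAt {A Y Z : ℝ → R}
    (hY : ∀ t, HasDerivAt Y (A t * Y t) t) (hZ : ∀ t, HasDerivAt Z (A t * Z t) t)
    (hunit : ∀ t, IsUnit (Y t)) (t : ℝ) :
    Z t = Y t * (Ring.inverse (Y 0) * Z 0) := by
  have hderiv : ∀ t, HasDerivAt (fun t => Ring.inverse (Y t) * Z t) 0 t := by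
    intro t
    refine ((hY t).inverse (hunit t)).mul (hZ t) |>.congr_deriv ?_
    simp only [mul_assoc, Ring.mul_inverse_cancel _ (hunit t), mul_one, neg_mul, neg_add_cancel]
  have hconst := is_const_of_deriv_eq_zero (fun t => (hderiv t).differentiableAt)
    (fun t => (hderiv t).deriv) t 0
  rw [← hconst, ← mul_assoc, Ring.mul_inverse_cancel _ (hunit t), one_mul]

theorem add_period_eq_mul_of_hasDerivAt {X g : ℝ → R} {p : ℝ} (hXper : ∀ t, X (t + p) = X t)
    (hg0 : g 0 = 1) (hg : ∀ t, HasDerivAt g (X t * g t) t) (hunit : ∀ t, IsUnit (g t)) (t : ℝ) :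
    g (t + p) = g t * g p := by
  have hshift : ∀ t, HasDerivAt (fun t => g (t + p)) (X t * g (t + p)) t := fun t => by
    simpa only [hXper] using (hg (t + p)).comp_add_const t p
  simpa [hg0] using eq_mul_inverse_mul_of_hasDerivAt hg hshift hunit t

theorem add_natCast_eq_mul_pow_of_hasDerivAt {X g : ℝ → R} (hXper : ∀ t, X (t + 1) = X t)
    (hg0 : g 0 = 1) (hg : ∀ t, HasDerivAt g (X t * g t) t) (hunit : ∀ t, IsUnit (g t))
    (t : ℝ) (n : ℕ) :
    g (t + n) = g t * g 1 ^ n := by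
  induction n with
  | zero => simp
  | succ n ih =>
    rw [Nat.cast_succ, ← add_assoc, add_period_eq_mul_of_hasDerivAt hXper hg0 hg hunit, ih,
      pow_succ, mul_assoc]

end Floquet

theorem UnitAddCircle.coe_add_natCast (s : ℝ) (n : ℕ) : ((s + n : ℝ) : UnitAddCircle) = s := by
  simpa using AddSubgroup.intCast_mem_zmultiples_one (R := ℝ) n

theorem UnitAddCircle.exists_nat_tendsto_sub_of_tendsto_coe {α : Type*} {l : Filter α}
    {u : α → ℝ} (hu : Tendsto u l atTop) (h : Tendsto (fun k => (u k : UnitAddCircle)) l (𝓝 0)) :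
    ∃ m : α → ℕ, Tendsto m l atTop ∧ Tendsto (fun k => u k - m k) l (𝓝 0) := by
  have hround : Tendsto (fun k => u k - round (u k)) l (𝓝 0) := by
    rw [tendsto_zero_iff_norm_tendsto_zero]
    simpa [Function.comp_def, UnitAddCircle.norm_eq] using tendsto_norm_zero.comp h
  have hround_top : Tendsto (fun k => round (u k)) l atTop := by
    refine tendsto_intCast_atTop_iff (R := ℝ) |>.mp ?_
    refine (hu.atTop_add hround.neg).congr fun k => ?_
    simp
  refine ⟨fun k => (round (u k)).toNat, ?_, hround.congr' ?_⟩
  · exact (tendsto_atTop_atTop.2 fun b : ℕ => ⟨(b : ℤ), fun a ha => by omega⟩ :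
      Tendsto Int.toNat atTop atTop).comp hround_top
  · filter_upwards [hround_top.eventually_ge_atTop 0] with k hk
    rw [show ((round (u k)).toNat : ℝ) = round (u k) by exact_mod_cast Int.toNat_of_nonneg hk]

section Recurrence

variable {F : Type*} [NormedAddCommGroup F] [NormedSpace ℝ F] {G : ℝ → F →L[ℝ] F} {s : ℝ}
  {x : F} {α : Type*} {l : Filter α}

theorem tendsto_pow_apply_of_tendsto_apply_add {Ginv : ℝ → F →L[ℝ] F}
    (hG : ∀ t (n : ℕ), G (t + n) = G t * G 1 ^ n) (hinv : ∀ t, Ginv t * G t = 1)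
    (hGinv : ContinuousAt Ginv s) {ε : α → ℝ} {m : α → ℕ} (hε : Tendsto ε l (𝓝 0))
    (h : Tendsto (fun k => G (s + ε k + m k) x) l (𝓝 (G s x))) :
    Tendsto (fun k => (G 1 ^ m k) x) l (𝓝 x) := by
  have hGinv_lim : Tendsto (fun k => Ginv (s + ε k)) l (𝓝 (Ginv s)) :=
    hGinv.tendsto.comp (by simpa using tendsto_const_nhds.add hε)
  have hlim := (isBoundedBilinearMap_apply.continuous.tendsto _).comp (hGinv_lim.prodMk_nhds h)
  have hx : Ginv s (G s x) = x := by
    rw [← mul_apply_eq_comp, hinv, one_apply_eq_self]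
  rw [hx] at hlim
  refine hlim.congr fun k => ?_
  show Ginv (s + ε k) (G (s + ε k + m k) x) = _
  rw [hG, mul_apply_eq_comp, ← mul_apply_eq_comp (Ginv _), hinv, one_apply_eq_self]

theorem tendsto_apply_add_natCast_of_tendsto_pow_apply
    (hG : ∀ t (n : ℕ), G (t + n) = G t * G 1 ^ n) {n : α → ℕ}
    (h : Tendsto (fun k => (G 1 ^ n k) x) l (𝓝 x)) :
    Tendsto (fun k => G (s + n k) x) l (𝓝 (G s x)) := by
  refine (((G s).continuous.tendsto x).comp h).congr fun k => ?_
  rw [Function.comp_apply, hG, mul_apply_eq_comp]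

end Recurrence

open Filter in
theorem recurrent_set_skew_product_general
    {F : Type*} [NormedAddCommGroup F] [NormedSpace ℝ F] [CompleteSpace F]
    (X g ginv : ℝ → F →L[ℝ] F)
    (hXper : ∀ t, X (t + 1) = X t)
    (hg0 : g 0 = 1) (hg : ∀ t, HasDerivAt g (X t ∘L g t) t)
    (hinv : ∀ s, g s ∘L ginv s = 1 ∧ ginv s ∘L g s = 1)
    (φ : ℝ → UnitAddCircle × F → UnitAddCircle × F)
    (hφ : ∀ (t s : ℝ) (x : F),
      φ t ((s : UnitAddCircle), x) = (((s + t : ℝ) : UnitAddCircle), g (t + s) (ginv s x))) :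
    ∀ (s : ℝ) (x : F),
      (∃ u : ℕ → ℝ, Tendsto u atTop atTop ∧
          Tendsto (fun k => φ (u k) ((s : UnitAddCircle), g s x)) atTop
            (nhds ((s : UnitAddCircle), g s x))) ↔
      (∃ n : ℕ → ℕ, Tendsto n atTop atTop ∧
          Tendsto (fun k => (g 1 ^ n k) x) atTop (nhds x)) := by
  intro s x
  have hunit (t : ℝ) : IsUnit (g t) := ⟨⟨g t, ginv t, (hinv t).1, (hinv t).2⟩, rfl⟩
  have hginv : ginv = fun t => Ring.inverse (g t) :=
    funext fun t => (Ring.inverse_unit ⟨g t, ginv t, (hinv t).1, (hinv t).2⟩).symm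
  have hfloquet := add_natCast_eq_mul_pow_of_hasDerivAt hXper hg0 hg hunit
  have hginv_cont : ContinuousAt ginv s := hginv ▸ ((hg s).inverse (hunit s)).continuousAt
  have hφ_orbit (t : ℝ) : φ t (s, g s x) = (((s + t : ℝ) : UnitAddCircle), g (s + t) x) := by
    rw [hφ, ← ContinuousLinearMap.comp_apply (ginv s), (hinv s).2, one_apply_eq_self, add_comm t]
  simp only [hφ_orbit, nhds_prod_eq, tendsto_prod_iff']
  constructor
  · rintro ⟨u, hu, hcirc, horbit⟩
    have hcirc0 : Tendsto (fun k => (u k : UnitAddCircle)) atTop (𝓝 0) := by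
      simpa using hcirc.sub_const (s : UnitAddCircle)
    obtain ⟨m, hm, hε⟩ := UnitAddCircle.exists_nat_tendsto_sub_of_tendsto_coe hu hcirc0
    exact ⟨m, hm, tendsto_pow_apply_of_tendsto_apply_add hfloquet (fun t => (hinv t).2)
      hginv_cont hε (by simpa only [add_assoc, sub_add_cancel] using horbit)⟩
  · rintro ⟨n, hn, hrec⟩
    exact ⟨fun k => n k, tendsto_natCast_atTop_atTop.comp hn,
      by simpa only [UnitAddCircle.coe_add_natCast] using tendsto_const_nhds,
      tendsto_apply_add_natCast_of_tendsto_pow_apply hfloquet hrec⟩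

open Filter in
/-- The recurrent set of the skew-product flow `φᵗ` equals `S¹ ×_g R(g)`: a point
`(s̄, g s x)` is recurrent for `φᵗ` iff `x` is recurrent for the discrete flow of `g = g 1`. -/
theorem recurrent_set_skew_product
    {F : Type*} [NormedAddCommGroup F] [NormedSpace ℝ F] [CompleteSpace F]
    (X g ginv : ℝ → F →L[ℝ] F)
    (hX : Continuous X) (hXper : ∀ t, X (t + 1) = X t)
    (hg0 : g 0 = 1) (hg : ∀ t, HasDerivAt g (X t ∘L g t) t)
    (hinv : ∀ s, g s ∘L ginv s = 1 ∧ ginv s ∘L g s = 1)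
    (φ : ℝ → UnitAddCircle × F → UnitAddCircle × F)
    (hφ : ∀ (t s : ℝ) (x : F),
      φ t ((s : UnitAddCircle), x) = (((s + t : ℝ) : UnitAddCircle), g (t + s) (ginv s x))) :
    ∀ (s : ℝ) (x : F),
      (∃ u : ℕ → ℝ, Tendsto u atTop atTop ∧
          Tendsto (fun k => φ (u k) ((s : UnitAddCircle), g s x)) atTop
            (nhds ((s : UnitAddCircle), g s x))) ↔
      (∃ n : ℕ → ℕ, Tendsto n atTop atTop ∧
          Tendsto (fun k => (g 1 ^ n k) x) atTop (nhds x)) :=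
  recurrent_set_skew_product_general X g ginv hXper hg0 hg hinv φ hφ
end

section
/- The map E ↦ S¹ ×_g E is a bijection between the chain transitive components of the discrete-time flow generated by g on F and the chain transitive components of the skew-product flow φᵗ on S¹ × F. -/
set_option maxHeartbeats 2000000
set_option synthInstance.maxHeartbeats 400000
set_option linter.unusedSectionVars false

/-- An `(ε, S)`-chain from `x` to `y` for `σ`, with respect to the distance function `d`. -/
def IsChainFrom {U T : Type*} (d : U → U → ℝ) (σ : T → U → U) (S : Set T)
    (ε : U → ℝ) (x y : U) : Prop :=
  ∃ k : ℕ, ∃ ts : Fin (k + 1) → T, ∃ xs : Fin (k + 2) → U,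
    xs 0 = x ∧ xs (Fin.last (k + 1)) = y ∧ (∀ i, ts i ∈ S) ∧
    ∀ i : Fin (k + 1),
      d (xs i.succ) (σ (ts i) (xs i.castSucc)) < ε (σ (ts i) (xs i.castSucc))

/-- `x` and `y` are chain equivalent: for every positive continuous `ε` and every
threshold `t > 0` there are `(ε,t)`-chains from `x` to `y` and from `y` to `x`,
with all chain times in `Times t`. -/
def ChainEquiv {U T : Type*} [TopologicalSpace U] (d : U → U → ℝ) (σ : T → U → U)
    (Times : ℝ → Set T) (x y : U) : Prop :=
  ∀ ε : U → ℝ, Continuous ε → (∀ u, 0 < ε u) → ∀ t : ℝ, 0 < t →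
    IsChainFrom d σ (Times t) ε x y ∧ IsChainFrom d σ (Times t) ε y x

/-- The chain transitive components: equivalence classes of chain equivalence
inside the chain recurrent set. -/
def ChainComponents {U T : Type*} [TopologicalSpace U] (d : U → U → ℝ) (σ : T → U → U)
    (Times : ℝ → Set T) : Set (Set U) :=
  {C | ∃ x, ChainEquiv d σ Times x x ∧
    C = {y | ChainEquiv d σ Times y y ∧ ChainEquiv d σ Times x y}}

/-!
The fibre embeddings `y ↦ (s, g s y)` turn steps of `g 1 ^ n` into time-`n` steps of `φ`,
because `g (s + n) = g s (g 1) ^ n` by periodicity of `X`. Conversely, `(α, x) ↦ (g s)⁻¹ x` with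
`s ∈ [0, 1)` the phase of `α` turns a `φ`-chain into a `g 1`-chain once each jump is re-read at
the lift of the phase nearest to the next point; the error function on `S¹ × F` is obtained from
a continuous modulus of continuity of `(s, x) ↦ (g s)⁻¹ x`, uniform for `s` in a compact interval.
Finally, `(s₁, g s₁ y)` and `(s₂, g s₂ y)` lie on one orbit of `φ`, so a chain recurrent `y` is
chain equivalent to its whole fibre `⋃ s, {(s, g s y)}`, and the components correspond.
-/

open Set Relation Topology

section Chains

variable {U T : Type*} {d : U → U → ℝ} {σ : T → U → U}

def ChainStep (d : U → U → ℝ) (σ : T → U → U) (S : Set T) (ε : U → ℝ) (x x' : U) : Prop :=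
  ∃ r ∈ S, d x' (σ r x) < ε (σ r x)

theorem ChainStep.mono {S S' : Set T} {ε : U → ℝ} (hS : S ⊆ S') {x x' : U}
    (h : ChainStep d σ S ε x x') : ChainStep d σ S' ε x x' :=
  let ⟨r, hr, hx'⟩ := h
  ⟨r, hS hr, hx'⟩

theorem isChainFrom_iff_transGen {S : Set T} {ε : U → ℝ} {x y : U} :
    IsChainFrom d σ S ε x y ↔ TransGen (ChainStep d σ S ε) x y := by
  constructor
  · rintro ⟨k, ts, xs, rfl, rfl, hS, hstep⟩
    have hreach : ∀ j : Fin (k + 1), TransGen (ChainStep d σ S ε) (xs 0) (xs j.succ) := by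
      intro j
      induction j using Fin.induction with
      | zero => exact .single ⟨ts 0, hS 0, hstep 0⟩
      | succ j ih => exact ih.tail ⟨ts j.succ, hS _, hstep j.succ⟩
    exact hreach (Fin.last k)
  · intro h
    induction h with
    | @single y hxy =>
      obtain ⟨r, hr, hxy⟩ := hxy
      exact ⟨0, fun _ => r, ![x, y], rfl, rfl, fun _ => hr, fun i => by fin_cases i; exact hxy⟩
    | @tail b c _ hbc ih =>
      obtain ⟨r, hr, hbc⟩ := hbc
      obtain ⟨k, ts, xs, h0, hlast, hS, hstep⟩ := ih
      refine ⟨k + 1, Fin.snoc ts r, Fin.snoc xs c, by simpa using h0, by simp, ?_, ?_⟩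
      · exact Fin.lastCases (by simpa using hr) (fun i => by simpa using hS i)
      · refine Fin.lastCases ?_ (fun i => ?_)
        · simpa only [Fin.succ_last, Fin.snoc_last, Fin.snoc_castSucc, hlast] using hbc
        · simpa only [Fin.succ_castSucc, Fin.snoc_castSucc] using hstep i

theorem IsChainFrom.trans {S : Set T} {ε : U → ℝ} {x y z : U} (hxy : IsChainFrom d σ S ε x y)
    (hyz : IsChainFrom d σ S ε y z) : IsChainFrom d σ S ε x z := by
  rw [isChainFrom_iff_transGen] at *
  exact hxy.trans hyz

variable [TopologicalSpace U] {Times : ℝ → Set T}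

def ChainReachable (d : U → U → ℝ) (σ : T → U → U) (Times : ℝ → Set T) (x y : U) : Prop :=
  ∀ ε : U → ℝ, Continuous ε → (∀ u, 0 < ε u) → ∀ t : ℝ, 0 < t →
    IsChainFrom d σ (Times t) ε x y

theorem ChainReachable.trans {x y z : U} (hxy : ChainReachable d σ Times x y)
    (hyz : ChainReachable d σ Times y z) : ChainReachable d σ Times x z :=
  fun ε hε hpos t ht => (hxy ε hε hpos t ht).trans (hyz ε hε hpos t ht)

theorem chainEquiv_iff {x y : U} :
    ChainEquiv d σ Times x y ↔ ChainReachable d σ Times x y ∧ ChainReachable d σ Times y x :=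
  ⟨fun h => ⟨fun ε hε hpos t ht => (h ε hε hpos t ht).1,
      fun ε hε hpos t ht => (h ε hε hpos t ht).2⟩,
    fun h ε hε hpos t ht => ⟨h.1 ε hε hpos t ht, h.2 ε hε hpos t ht⟩⟩

theorem ChainEquiv.symm {x y : U} (h : ChainEquiv d σ Times x y) : ChainEquiv d σ Times y x :=
  chainEquiv_iff.2 (chainEquiv_iff.1 h).symm

theorem ChainEquiv.trans {x y z : U} (hxy : ChainEquiv d σ Times x y)
    (hyz : ChainEquiv d σ Times y z) : ChainEquiv d σ Times x z := by
  rw [chainEquiv_iff] at *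
  exact ⟨hxy.1.trans hyz.1, hyz.2.trans hxy.2⟩

theorem ChainEquiv.map {U' T' : Type*} [TopologicalSpace U'] {d' : U' → U' → ℝ}
    {σ' : T' → U' → U'} {Times' : ℝ → Set T'} {f : U → U'}
    (hf : ∀ x y, ChainReachable d σ Times x y → ChainReachable d' σ' Times' (f x) (f y))
    {x y : U} (h : ChainEquiv d σ Times x y) : ChainEquiv d' σ' Times' (f x) (f y) := by
  rw [chainEquiv_iff] at *
  exact ⟨hf _ _ h.1, hf _ _ h.2⟩

end Chains

section Components

variable {α β κ : Type*} {r₁ : α → α → Prop} {r₂ : β → β → Prop}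

theorem setOf_rel_eq_setOf_rel (symm : ∀ ⦃x y⦄, r₁ x y → r₁ y x)
    (trans : ∀ ⦃x y z⦄, r₁ x y → r₁ y z → r₁ x z) {x y : α} (h : r₁ x y) :
    {z | r₁ z z ∧ r₁ x z} = {z | r₁ z z ∧ r₁ y z} :=
  ext fun _ => and_congr_right fun _ => ⟨trans (symm h), trans h⟩

theorem iUnion_image_setOf_rel (trans₂ : ∀ ⦃x y z⦄, r₂ x y → r₂ y z → r₂ x z)
    {ι : κ → α → β} {π : β → α} {s₀ : κ}
    (hι : ∀ s x y, r₁ x y → r₂ (ι s x) (ι s y)) (hπ : ∀ p q, r₂ p q → r₁ (π p) (π q))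
    (hπι : ∀ x, π (ι s₀ x) = x) (hιπ : ∀ p, ∃ s, ι s (π p) = p)
    (hfiber : ∀ s x, r₁ x x → r₂ (ι s₀ x) (ι s x)) (x : α) :
    ⋃ s, ι s '' {y | r₁ y y ∧ r₁ x y} = {q | r₂ q q ∧ r₂ (ι s₀ x) q} := by
  ext q
  simp only [mem_iUnion, mem_image, mem_ofPred_eq]
  constructor
  · rintro ⟨s, y, ⟨hy, hxy⟩, rfl⟩
    exact ⟨hι s y y hy, trans₂ (hι s₀ x y hxy) (hfiber s y hy)⟩
  · rintro ⟨hq, hxq⟩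
    obtain ⟨s, hs⟩ := hιπ q
    exact ⟨s, π q, ⟨hπ q q hq, hπι x ▸ hπ _ _ hxq⟩, hs⟩

theorem bijOn_iUnion_image_setOf_rel (symm₁ : ∀ ⦃x y⦄, r₁ x y → r₁ y x)
    (trans₁ : ∀ ⦃x y z⦄, r₁ x y → r₁ y z → r₁ x z) (symm₂ : ∀ ⦃x y⦄, r₂ x y → r₂ y x)
    (trans₂ : ∀ ⦃x y z⦄, r₂ x y → r₂ y z → r₂ x z)
    {ι : κ → α → β} {π : β → α} {s₀ : κ}
    (hι : ∀ s x y, r₁ x y → r₂ (ι s x) (ι s y)) (hπ : ∀ p q, r₂ p q → r₁ (π p) (π q))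
    (hπι : ∀ x, π (ι s₀ x) = x) (hιπ : ∀ p, ∃ s, ι s (π p) = p)
    (hfiber : ∀ s x, r₁ x x → r₂ (ι s₀ x) (ι s x)) :
    BijOn (fun E => ⋃ s, ι s '' E) {C | ∃ x, r₁ x x ∧ C = {y | r₁ y y ∧ r₁ x y}}
      {C | ∃ p, r₂ p p ∧ C = {q | r₂ q q ∧ r₂ p q}} := by
  have himage := iUnion_image_setOf_rel trans₂ hι hπ hπι hιπ hfiber
  refine ⟨?_, ?_, ?_⟩
  · rintro _ ⟨x, hx, rfl⟩
    exact ⟨ι s₀ x, hι s₀ x x hx, himage x⟩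
  · rintro _ ⟨x, hx, rfl⟩ _ ⟨y, hy, rfl⟩ hxy
    have hy' : ι s₀ y ∈ {q | r₂ q q ∧ r₂ (ι s₀ x) q} := by
      simp only [himage] at hxy
      exact hxy ▸ ⟨hι s₀ y y hy, hι s₀ y y hy⟩
    simpa only [hπι] using setOf_rel_eq_setOf_rel symm₁ trans₁ (hπ _ _ hy'.2)
  · rintro _ ⟨p, hp, rfl⟩
    obtain ⟨s, hs⟩ := hιπ p
    refine ⟨_, ⟨π p, hπ p p hp, rfl⟩, ?_⟩
    have hfib := hfiber s (π p) (hπ p p hp)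
    rw [hs] at hfib
    exact (himage (π p)).trans (setOf_rel_eq_setOf_rel symm₂ trans₂ hfib)

end Components

section Modulus

theorem exists_continuous_pos_modulus {X Y : Type*} [PseudoMetricSpace X] [PseudoMetricSpace Y]
    {f : X → Y} (hf : Continuous f) {ε : Y → ℝ} (hε : Continuous ε) (hpos : ∀ y, 0 < ε y) :
    ∃ δ : C(X, ℝ), ∀ x, 0 < δ x ∧ ∀ x', dist x' x < δ x → dist (f x') (f x) < ε (f x) := by
  let t : X → Set ℝ := fun x => {c | 0 < c ∧ ∀ x', dist x' x < c → dist (f x') (f x) < ε (f x)}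
  have hconvex (x : X) : Convex ℝ (t x) := by
    refine OrdConnected.convex ⟨fun a ha b hb c hc => ?_⟩
    exact ⟨ha.1.trans_le hc.1, fun x' hx' => hb.2 x' (hx'.trans_le hc.2)⟩
  -- the admissible radii at `x` form an interval, so local constant choices glue by a partition
  -- of unity
  refine exists_continuous_forall_mem_convex_of_local_const hconvex fun x => ?_
  have hη := hpos (f x)
  have hnear : ∀ᶠ y in 𝓝 x, dist (f y) (f x) < ε (f x) / 4 ∧ ε (f x) / 2 < ε (f y) :=
    ((hf.tendsto x).eventually (Metric.ball_mem_nhds (f x) (by positivity))).and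
      (((hε.comp hf).tendsto x).eventually (lt_mem_nhds (half_lt_self hη)))
  obtain ⟨r, hr, hball⟩ := Metric.eventually_nhds_iff.1 hnear
  refine ⟨r / 2, Metric.eventually_nhds_iff.2 ⟨r / 2, half_pos hr, fun y hy => ?_⟩⟩
  refine ⟨half_pos hr, fun x' hx' => ?_⟩
  have hx'x := @hball x' (by linarith [dist_triangle x' y x])
  have hyx := hball (hy.trans (half_lt_self hr))
  calc dist (f x') (f y) ≤ dist (f x') (f x) + dist (f y) (f x) := dist_triangle_right _ _ _
    _ < ε (f y) := by linarith [hx'x.1, hyx.1, hyx.2]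

theorem exists_continuous_pos_modulus_of_isCompact {S Y Z : Type*} [PseudoMetricSpace S]
    [PseudoMetricSpace Y] [PseudoMetricSpace Z] {f : S × Y → Z} (hf : Continuous f)
    {ε : Z → ℝ} (hε : Continuous ε) (hpos : ∀ z, 0 < ε z) {K : Set S} (hK : IsCompact K)
    (hKne : K.Nonempty) :
    ∃ δ : Y → ℝ, Continuous δ ∧ (∀ y, 0 < δ y) ∧
      ∀ s ∈ K, ∀ y q, dist q (s, y) < δ y → dist (f q) (f (s, y)) < ε (f (s, y)) := by
  obtain ⟨δ, hδ⟩ := exists_continuous_pos_modulus hf hε hpos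
  have hcont (y : Y) : Continuous fun s => δ (s, y) := by fun_prop
  refine ⟨fun y => sInf ((fun s => δ (s, y)) '' K),
    hK.continuous_sInf (δ.continuous.comp continuous_swap), fun y => ?_, fun s hs y q hq => ?_⟩
  · obtain ⟨s, -, hs⟩ := (hK.image (hcont y)).sInf_mem (hKne.image _)
    simpa only [← hs] using (hδ _).1
  · exact (hδ (s, y)).2 q
      (hq.trans_le (csInf_le ((hK.image (hcont y)).bddBelow) (mem_image_of_mem _ hs)))

end Modulus

section Phase

noncomputable def phase (α : UnitAddCircle) : ℝ := AddCircle.equivIco 1 0 α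

theorem phase_mem_Ico (α : UnitAddCircle) : phase α ∈ Ico 0 1 := by
  simpa [phase] using (AddCircle.equivIco 1 0 α).2

@[simp]
theorem coe_phase (α : UnitAddCircle) : ((phase α : ℝ) : UnitAddCircle) = α :=
  (AddCircle.equivIco 1 0).symm_apply_apply α

@[simp]
theorem phase_zero : phase 0 = 0 := by
  simpa [phase] using AddCircle.coe_equivIco_mk_apply (p := (1 : ℝ)) 0

theorem UnitAddCircle.dist_coe_coe {a b : ℝ} (h : |a - b| ≤ 1 / 2) :
    dist (a : UnitAddCircle) (b : UnitAddCircle) = |a - b| := by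
  rw [dist_eq_norm, ← AddCircle.coe_sub, AddCircle.norm_coe_eq_abs_iff _ one_ne_zero]
  simpa using h

end Phase

section Cocycle

variable {R : Type*} [NormedRing R] [NormedAlgebra ℝ R] [HasSummableGeomSeries R] {a b : ℝ → R}

theorem ringInverse_eq_of_mul_eq_one (hab : ∀ s, a s * b s = 1 ∧ b s * a s = 1) :
    (fun s => Ring.inverse (a s)) = b :=
  funext fun s => Ring.inverse_unit ⟨a s, b s, (hab s).1, (hab s).2⟩

theorem Continuous.of_mul_eq_one (ha : Continuous a)
    (hab : ∀ s, a s * b s = 1 ∧ b s * a s = 1) : Continuous b := by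
  rw [← ringInverse_eq_of_mul_eq_one hab, continuous_iff_continuousAt]
  exact fun t =>
    (NormedRing.inverse_continuousAt ⟨a t, b t, (hab t).1, (hab t).2⟩).comp (x := t)
      ha.continuousAt

theorem HasDerivAt.of_mul_eq_one {a' : R} {t : ℝ} (ha : HasDerivAt a a' t)
    (hab : ∀ s, a s * b s = 1 ∧ b s * a s = 1) : HasDerivAt b (-(b t * a' * b t)) t := by
  have := (hasFDerivAt_ringInverse (𝕜 := ℝ) ⟨a t, b t, (hab t).1, (hab t).2⟩).comp_hasDerivAt t ha
  rw [Function.comp_def, ringInverse_eq_of_mul_eq_one hab] at this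
  simpa using this

/-- `(g t)⁻¹ g (t + 1)` has derivative zero. -/
theorem fundamentalSolution_add_one {X g ginv : ℝ → R} (hXper : ∀ t, X (t + 1) = X t)
    (hg0 : g 0 = 1) (hg : ∀ t, HasDerivAt g (X t * g t) t)
    (hinv : ∀ s, g s * ginv s = 1 ∧ ginv s * g s = 1) (t : ℝ) : g (t + 1) = g t * g 1 := by
  have hderiv (s : ℝ) : HasDerivAt (fun s => ginv s * g (s + 1)) 0 s := by
    have hshift : HasDerivAt (fun s => g (s + 1)) (X s * g (s + 1)) s := by
      simpa [hXper] using (hg (s + 1)).comp_add_const s 1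
    refine (((hg s).of_mul_eq_one hinv).mul hshift).congr_deriv ?_
    rw [mul_assoc, mul_assoc (X s), (hinv s).1, mul_one, neg_mul, mul_assoc, neg_add_cancel]
  have hconst : ginv t * g (t + 1) = ginv 0 * g (0 + 1) :=
    is_const_of_deriv_eq_zero (fun s => (hderiv s).differentiableAt) (fun s => (hderiv s).deriv)
      t 0
  have hginv0 : ginv 0 = 1 := by simpa [hg0] using (hinv 0).2
  rw [hginv0, one_mul, zero_add] at hconst
  rw [← hconst, ← mul_assoc, (hinv t).1, one_mul]

theorem fundamentalSolution_add_nat {X g ginv : ℝ → R} (hXper : ∀ t, X (t + 1) = X t)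
    (hg0 : g 0 = 1) (hg : ∀ t, HasDerivAt g (X t * g t) t)
    (hinv : ∀ s, g s * ginv s = 1 ∧ ginv s * g s = 1) (t : ℝ) (n : ℕ) :
    g (t + n) = g t * g 1 ^ n := by
  induction n with
  | zero => simp
  | succ n ih =>
    rw [Nat.cast_succ, ← add_assoc, fundamentalSolution_add_one hXper hg0 hg hinv, ih, pow_succ,
      mul_assoc]

end Cocycle

section SkewProduct

variable {F : Type*} [NormedAddCommGroup F] [NormedSpace ℝ F]

theorem UnitAddCircle.coe_natCast (n : ℕ) : ((n : ℝ) : UnitAddCircle) = 0 := by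
  rw [← nsmul_one, AddCircle.coe_nsmul, AddCircle.coe_period, nsmul_zero]

def fiberEmbed (g : ℝ → F →L[ℝ] F) (s : ℝ) (y : F) : UnitAddCircle × F :=
  ((s : UnitAddCircle), g s y)

noncomputable def fiberProj (ginv : ℝ → F →L[ℝ] F) (p : UnitAddCircle × F) : F :=
  ginv (phase p.1) p.2

variable {g ginv : ℝ → F →L[ℝ] F} {φ : ℝ → UnitAddCircle × F → UnitAddCircle × F}

theorem fiberEmbed_add_nat (hcoc : ∀ s (n : ℕ), g (s + n) = g s * g 1 ^ n) (s : ℝ) (n : ℕ)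
    (y : F) : fiberEmbed g (s + n) y = fiberEmbed g s ((g 1 ^ n) y) := by
  simp [fiberEmbed, hcoc, UnitAddCircle.coe_natCast]

theorem flow_fiberEmbed (hinv : ∀ s, g s ∘L ginv s = 1 ∧ ginv s ∘L g s = 1)
    (hφ : ∀ (t s : ℝ) (x : F),
      φ t ((s : UnitAddCircle), x) = (((s + t : ℝ) : UnitAddCircle), g (t + s) (ginv s x)))
    (r s : ℝ) (y : F) : φ r (fiberEmbed g s y) = fiberEmbed g (s + r) y := by
  have hy : ginv s (g s y) = y := by simpa using congrArg (· y) (hinv s).2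
  simp [fiberEmbed, hφ, hy, add_comm r s]

theorem fiberProj_fiberEmbed_zero (hg0 : g 0 = 1)
    (hinv : ∀ s, g s ∘L ginv s = 1 ∧ ginv s ∘L g s = 1) (x : F) :
    fiberProj ginv (fiberEmbed g 0 x) = x := by
  simpa [fiberProj, fiberEmbed, hg0] using congrArg (· x) (hinv 0).2

theorem fiberEmbed_phase_fiberProj (hinv : ∀ s, g s ∘L ginv s = 1 ∧ ginv s ∘L g s = 1)
    (p : UnitAddCircle × F) : fiberEmbed g (phase p.1) (fiberProj ginv p) = p := by
  simpa [fiberEmbed, fiberProj, Prod.ext_iff] using congrArg (· p.2) (hinv (phase p.1)).1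

end SkewProduct

section SkewProductChains

variable {F : Type*} [NormedAddCommGroup F] [NormedSpace ℝ F] {g ginv : ℝ → F →L[ℝ] F}
  {φ : ℝ → UnitAddCircle × F → UnitAddCircle × F}

abbrev TimeOneChainReachable (A : F →L[ℝ] F) : F → F → Prop :=
  ChainReachable (fun x y => ‖x - y‖) (fun (n : ℕ) x => (A ^ n) x) (fun t => {n : ℕ | t < (n : ℝ)})

abbrev SkewChainReachable (φ : ℝ → UnitAddCircle × F → UnitAddCircle × F) :
    UnitAddCircle × F → UnitAddCircle × F → Prop :=
  ChainReachable (fun p q => dist p.1 q.1 + ‖p.2 - q.2‖) φ (fun t => {r : ℝ | t < r})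

theorem chainReachable_fiberEmbed (hinv : ∀ s, g s ∘L ginv s = 1 ∧ ginv s ∘L g s = 1)
    (hφ : ∀ (t s : ℝ) (x : F),
      φ t ((s : UnitAddCircle), x) = (((s + t : ℝ) : UnitAddCircle), g (t + s) (ginv s x)))
    (hcoc : ∀ s (n : ℕ), g (s + n) = g s * g 1 ^ n) (s : ℝ) {x y : F}
    (h : TimeOneChainReachable (g 1) x y) :
    SkewChainReachable φ (fiberEmbed g s x) (fiberEmbed g s y) := by
  intro ε hε hpos t ht
  have hcont : Continuous fun u => ε (fiberEmbed g s u) / (‖g s‖ + 1) := by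
    unfold fiberEmbed
    fun_prop
  have hchain := h _ hcont (fun u => div_pos (hpos _) (by positivity)) t ht
  rw [isChainFrom_iff_transGen] at hchain ⊢
  refine hchain.lift (fiberEmbed g s) fun u v ⟨n, hn, huv⟩ => ⟨n, hn, ?_⟩
  rw [flow_fiberEmbed hinv hφ, fiberEmbed_add_nat hcoc]
  set w := (g 1 ^ n) u
  have hεw := hpos (fiberEmbed g s w)
  simp only [fiberEmbed, dist_self, zero_add, ← map_sub] at huv hεw ⊢
  calc ‖g s (v - w)‖ ≤ ‖g s‖ * ‖v - w‖ := (g s).le_opNorm _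
    _ ≤ ‖g s‖ * (ε (↑s, g s w) / (‖g s‖ + 1)) := by gcongr
    _ < ε (↑s, g s w) := by
      rw [← mul_div_assoc, div_lt_iff₀ (by positivity)]
      linarith

/-- A chain sees its starting point only through its orbit, and `fiberEmbed g s₁ y` and
`fiberEmbed g s₂ y` lie on one orbit of `φ`. -/
theorem chainReachable_fiberEmbed_of_self (hinv : ∀ s, g s ∘L ginv s = 1 ∧ ginv s ∘L g s = 1)
    (hφ : ∀ (t s : ℝ) (x : F),
      φ t ((s : UnitAddCircle), x) = (((s + t : ℝ) : UnitAddCircle), g (t + s) (ginv s x)))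
    (hcoc : ∀ s (n : ℕ), g (s + n) = g s * g 1 ^ n) (s₁ s₂ : ℝ) {y : F}
    (h : TimeOneChainReachable (g 1) y y) :
    SkewChainReachable φ (fiberEmbed g s₁ y) (fiberEmbed g s₂ y) := by
  intro ε hε hpos t ht
  have hchain := chainReachable_fiberEmbed hinv hφ hcoc s₂ h ε hε hpos (t + |s₂ - s₁|)
    (by positivity)
  rw [isChainFrom_iff_transGen] at hchain ⊢
  obtain ⟨z, ⟨r, hr, hz⟩, hzy⟩ := TransGen.head'_iff.1 hchain
  have hr' : t < r + (s₂ - s₁) := by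
    have := neg_abs_le (s₂ - s₁)
    simp only [mem_ofPred_eq] at hr
    linarith
  have horbit : φ (r + (s₂ - s₁)) (fiberEmbed g s₁ y) = φ r (fiberEmbed g s₂ y) := by
    rw [flow_fiberEmbed hinv hφ, flow_fiberEmbed hinv hφ]
    congr 1
    ring
  have hthreshold : {r : ℝ | t + |s₂ - s₁| < r} ⊆ {r | t < r} := fun r hr => by
    simp only [mem_ofPred_eq] at hr ⊢
    linarith [abs_nonneg (s₂ - s₁)]
  exact .head' ⟨_, hr', horbit ▸ hz⟩
    (ReflTransGen.mono (fun _ _ => ChainStep.mono hthreshold) _ _ hzy)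

theorem chainStep_fiberProj (hinv : ∀ s, g s ∘L ginv s = 1 ∧ ginv s ∘L g s = 1)
    (hφ : ∀ (t s : ℝ) (x : F),
      φ t ((s : UnitAddCircle), x) = (((s + t : ℝ) : UnitAddCircle), g (t + s) (ginv s x)))
    (hcoc : ∀ s (n : ℕ), g (s + n) = g s * g 1 ^ n) {ε δ : F → ℝ}
    (hδ : ∀ s ∈ Icc (-1 : ℝ) 2, ∀ y (q : ℝ × F),
      dist q (s, y) < δ y → dist (ginv q.1 q.2) (ginv s y) < ε (ginv s y))
    {t : ℝ} (ht : 0 ≤ t) {u v : UnitAddCircle × F}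
    (huv : ChainStep (fun p q => dist p.1 q.1 + ‖p.2 - q.2‖) φ {r | t + 2 < r} (fun p => δ p.2)
      u v) :
    ChainStep (fun x y => ‖x - y‖) (fun n x => (g 1 ^ n) x) {n : ℕ | t < (n : ℝ)} ε
      (fiberProj ginv u) (fiberProj ginv v) := by
  obtain ⟨r, hr, huv⟩ := huv
  simp only [mem_ofPred_eq] at hr
  set x := fiberProj ginv u
  -- write `φ r u` at the lift `s` of its phase closest to `phase v.1`, with `s + n = phase u.1 + r`
  set n := ⌊phase u.1 + r - phase v.1 + 1 / 2⌋₊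
  set s := phase u.1 + r - n with hs_def
  have hu := phase_mem_Ico u.1
  have hv := phase_mem_Ico v.1
  have hfloor : (n : ℝ) ≤ phase u.1 + r - phase v.1 + 1 / 2 :=
    Nat.floor_le (by linarith [hu.1, hv.2])
  have hfloor' : phase u.1 + r - phase v.1 + 1 / 2 < n + 1 := Nat.lt_floor_add_one _
  have hvs : |phase v.1 - s| ≤ 1 / 2 := abs_le.2 ⟨by linarith, by linarith⟩
  have hs : s ∈ Icc (-1 : ℝ) 2 := by
    have := abs_le.1 hvs
    constructor <;> linarith [hv.1, hv.2]
  have hφu : φ r u = fiberEmbed g s ((g 1 ^ n) x) := by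
    conv_lhs => rw [← fiberEmbed_phase_fiberProj hinv u]
    rw [flow_fiberEmbed hinv hφ, ← fiberEmbed_add_nat hcoc, sub_add_cancel]
  refine ⟨n, show t < (n : ℝ) by linarith [hu.1, hv.2], ?_⟩
  rw [hφu] at huv
  have hdist : dist (phase v.1, v.2) (s, g s ((g 1 ^ n) x)) < δ (g s ((g 1 ^ n) x)) := by
    have hcirc : |phase v.1 - s| = dist v.1 (s : UnitAddCircle) := by
      rw [← UnitAddCircle.dist_coe_coe hvs, coe_phase]
    rw [Prod.dist_eq, max_lt_iff, Real.dist_eq, dist_eq_norm, hcirc]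
    simp only [fiberEmbed] at huv
    constructor <;> linarith [dist_nonneg (x := v.1) (y := (s : UnitAddCircle)),
      norm_nonneg (v.2 - g s ((g 1 ^ n) x))]
  have hcancel : ginv s (g s ((g 1 ^ n) x)) = (g 1 ^ n) x := by
    simpa using congrArg (· ((g 1 ^ n) x)) (hinv s).2
  simpa only [fiberProj, ← dist_eq_norm, hcancel] using hδ s hs _ _ hdist

theorem chainReachable_fiberProj (hinv : ∀ s, g s ∘L ginv s = 1 ∧ ginv s ∘L g s = 1)
    (hφ : ∀ (t s : ℝ) (x : F),
      φ t ((s : UnitAddCircle), x) = (((s + t : ℝ) : UnitAddCircle), g (t + s) (ginv s x)))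
    (hcoc : ∀ s (n : ℕ), g (s + n) = g s * g 1 ^ n) (hginv : Continuous ginv)
    {p q : UnitAddCircle × F} (h : SkewChainReachable φ p q) :
    TimeOneChainReachable (g 1) (fiberProj ginv p) (fiberProj ginv q) := by
  intro ε hε hpos t ht
  obtain ⟨δ, hδc, hδpos, hδ⟩ := exists_continuous_pos_modulus_of_isCompact
    (f := fun q : ℝ × F => ginv q.1 q.2) (by fun_prop) hε hpos isCompact_Icc
    (nonempty_Icc.2 (by norm_num : (-1 : ℝ) ≤ 2))
  have hchain := h (fun p => δ p.2) (hδc.comp continuous_snd) (fun p => hδpos p.2) (t + 2)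
    (by linarith)
  rw [isChainFrom_iff_transGen] at hchain ⊢
  exact hchain.lift (fiberProj ginv) fun u v huv =>
    chainStep_fiberProj hinv hφ hcoc hδ ht.le huv

end SkewProductChains

theorem chain_components_bijection_general
    {F : Type*} [NormedAddCommGroup F] [NormedSpace ℝ F] [CompleteSpace F]
    (X g ginv : ℝ → F →L[ℝ] F)
    (hXper : ∀ t, X (t + 1) = X t)
    (hg0 : g 0 = 1) (hg : ∀ t, HasDerivAt g (X t ∘L g t) t)
    (hinv : ∀ s, g s ∘L ginv s = 1 ∧ ginv s ∘L g s = 1)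
    (φ : ℝ → UnitAddCircle × F → UnitAddCircle × F)
    (hφ : ∀ (t s : ℝ) (x : F),
      φ t ((s : UnitAddCircle), x) = (((s + t : ℝ) : UnitAddCircle), g (t + s) (ginv s x))) :
    Set.BijOn (fun E : Set F => ⋃ s : ℝ, (fun y => ((s : UnitAddCircle), y)) '' (g s '' E))
      (ChainComponents (fun x y => ‖x - y‖) (fun (n : ℕ) (x : F) => (g 1 ^ n) x)
        (fun t => {n : ℕ | t < (n : ℝ)}))
      (ChainComponents (fun p q => dist p.1 q.1 + ‖p.2 - q.2‖) φ
        (fun t => {r : ℝ | t < r})) := by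
  have hcoc := fundamentalSolution_add_nat hXper hg0 hg hinv
  have hginv : Continuous ginv :=
    (continuous_iff_continuousAt.2 fun t => (hg t).continuousAt).of_mul_eq_one hinv
  have hunion : (fun E : Set F => ⋃ s : ℝ, (fun y => ((s : UnitAddCircle), y)) '' (g s '' E)) =
      fun E => ⋃ s, fiberEmbed g s '' E := by
    simp only [image_image]
    rfl
  rw [hunion]
  refine bijOn_iUnion_image_setOf_rel (ι := fiberEmbed g) (π := fiberProj ginv) (s₀ := 0)
    ?_ ?_ ?_ ?_ ?_ ?_ (fiberProj_fiberEmbed_zero hg0 hinv)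
    (fun p => ⟨phase p.1, fiberEmbed_phase_fiberProj hinv p⟩) ?_
  iterate 2
    · exact fun _ _ => ChainEquiv.symm
    · exact fun _ _ _ => ChainEquiv.trans
  · exact fun s _ _ => ChainEquiv.map fun _ _ => chainReachable_fiberEmbed hinv hφ hcoc s
  · exact fun _ _ => ChainEquiv.map fun _ _ => chainReachable_fiberProj hinv hφ hcoc hginv
  · intro s x hx
    have hx := (chainEquiv_iff.1 hx).1
    exact chainEquiv_iff.2 ⟨chainReachable_fiberEmbed_of_self hinv hφ hcoc 0 s hx,
      chainReachable_fiberEmbed_of_self hinv hφ hcoc s 0 hx⟩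

/-- The map `E ↦ S¹ ×_g E` is a bijection between the chain transitive components of the
discrete-time flow generated by `g = g 1` on `F` and those of the skew-product flow `φᵗ`. -/
theorem chain_components_bijection
    {F : Type*} [NormedAddCommGroup F] [NormedSpace ℝ F] [CompleteSpace F]
    (X g ginv : ℝ → F →L[ℝ] F)
    (hX : Continuous X) (hXper : ∀ t, X (t + 1) = X t)
    (hg0 : g 0 = 1) (hg : ∀ t, HasDerivAt g (X t ∘L g t) t)
    (hinv : ∀ s, g s ∘L ginv s = 1 ∧ ginv s ∘L g s = 1)
    (φ : ℝ → UnitAddCircle × F → UnitAddCircle × F)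
    (hφ : ∀ (t s : ℝ) (x : F),
      φ t ((s : UnitAddCircle), x) = (((s + t : ℝ) : UnitAddCircle), g (t + s) (ginv s x))) :
    Set.BijOn (fun E : Set F => ⋃ s : ℝ, (fun y => ((s : UnitAddCircle), y)) '' (g s '' E))
      (ChainComponents (fun x y => ‖x - y‖) (fun (n : ℕ) (x : F) => (g 1 ^ n) x)
        (fun t => {n : ℕ | t < (n : ℝ)}))
      (ChainComponents (fun p q => dist p.1 q.1 + ‖p.2 - q.2‖) φ
        (fun t => {r : ℝ | t < r})) :=
  chain_components_bijection_general X g ginv hXper hg0 hg hinv φ hφ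
end

section
/- For a continuous flow σᵗ on a metric space U, every ω-limit set ω(x) is chain transitive (with chains defined via positive continuous functions ε : U → (0,∞)). -/
open Filter

/-- For a continuous flow `σᵗ` on a metric space, every ω-limit set is chain transitive,
where chains use positive continuous `ε : U → (0,∞)` and all chain times exceed `t`. -/
theorem omegaLimit_chain_transitive
    {U : Type*} [MetricSpace U] (σ : ℝ → U → U)
    (hσ0 : σ 0 = id) (hσadd : ∀ t r : ℝ, σ t ∘ σ r = σ (t + r))
    (hσcont : Continuous fun p : ℝ × U => σ p.1 p.2) :
    ∀ x : U,
      ∀ y ∈ {y | ∃ u : ℕ → ℝ, Tendsto u atTop atTop ∧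
          Tendsto (fun k => σ (u k) x) atTop (nhds y)},
      ∀ z ∈ {y | ∃ u : ℕ → ℝ, Tendsto u atTop atTop ∧
          Tendsto (fun k => σ (u k) x) atTop (nhds y)},
      ∀ ε : U → ℝ, Continuous ε → (∀ u, 0 < ε u) → ∀ t : ℝ, 0 < t →
        IsChainFrom dist σ {r : ℝ | t < r} ε y z := by
  rintro x y ⟨u, hu, hux⟩ z ⟨v, hv, hvx⟩ ε hεc hεpos t ht
  set s := t + 1 with hs
  have hst : t < s := by simp [hs]
  have hcσs : Continuous (σ s) := hσcont.comp (Continuous.prodMk_right s)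
  have hcont : Tendsto (fun k => σ (s + u k) x) atTop (nhds (σ s y)) := by
    have h1 : Tendsto (fun k => σ s (σ (u k) x)) atTop (nhds (σ s y)) :=
      (hcσs.continuousAt.tendsto).comp hux
    have he : (fun k => σ s (σ (u k) x)) = fun k => σ (s + u k) x :=
      funext fun k => congrFun (hσadd s (u k)) x
    rwa [he] at h1
  have hN' : ∀ᶠ k in atTop, dist (σ (s + u k) x) (σ s y) < ε (σ s y) :=
    (Metric.tendsto_nhds.mp hcont) _ (hεpos _)
  obtain ⟨N, hN⟩ := hN'.exists
  have h2 : Tendsto (fun m => ε (σ (v m) x) - dist z (σ (v m) x)) atTop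
      (nhds (ε z - dist z z)) := by
    exact ((hεc.continuousAt.tendsto).comp hvx).sub
      (((continuous_const.dist continuous_id).continuousAt.tendsto).comp hvx)
  have h2' : ∀ᶠ m in atTop, 0 < ε (σ (v m) x) - dist z (σ (v m) x) := by
    apply h2.eventually_const_lt
    simpa using hεpos z
  have h3 : ∀ᶠ m in atTop, s + u N + t < v m := hv.eventually_gt_atTop _
  obtain ⟨M, hM1, hM2⟩ := (h2'.and h3).exists
  refine ⟨1, ![s, v M - (s + u N)], ![y, σ (s + u N) x, z], rfl, rfl, ?_, ?_⟩
  · intro i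
    fin_cases i
    · exact hst
    · show t < v M - (s + u N); linarith
  · intro i
    fin_cases i
    · simpa using hN
    · have heq : σ (v M - (s + u N)) (σ (s + u N) x) = σ (v M) x := by
        have := congrFun (hσadd (v M - (s + u N)) (s + u N)) x
        simpa using this
      simp only [Fin.succ, Fin.castSucc]
      show dist z (σ (v M - (s + u N)) (σ (s + u N) x)) <
        ε (σ (v M - (s + u N)) (σ (s + u N) x))
      rw [heq]; linarith
end
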